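/- arXiv:1302.0428 — 5 statements merged into one kernel-verified Lean document; each statement's English description precedes it below -/
import Mathlib

section
/- Let W = S_n with its Bruhat order ≤ and length function ℓ (number of inversions). If w₁ ≤ w₂ and ℓ(w₂) = ℓ(w₁) + 2, then there exist exactly two elements v ∈ W with w₁ ≤ v ≤ w₂ and ℓ(v) = ℓ(w₁) + 1. -/
open Equiv

/-- The Coxeter length of a permutation of `Fin n`: its number of inversions. -/
def invLength {n : ℕ} (w : Perm (Fin n)) : ℕ :=
  (Finset.univ.filter (fun p : Fin n × Fin n => p.1 < p.2 ∧ w p.2 < w p.1)).card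

/-- The Bruhat order on `S_n`: `v ≤ w` iff `w` is obtained from `v` by a chain of
multiplications by transpositions, each strictly increasing the number of inversions. -/
def bruhatLE {n : ℕ} (v w : Perm (Fin n)) : Prop :=
  Relation.ReflTransGen
    (fun a b => (∃ i j : Fin n, i ≠ j ∧ b = a * Equiv.swap i j) ∧ invLength a < invLength b)
    v w

/-!
Let `s` be a simple transposition. Right multiplication by `s` turns every Bruhat edge
`x → x t` with `t ≠ s` into an edge `x s → x t s`: otherwise the lengths force
`ℓ(x t) = ℓ(x) + 1` with `s` an ascent of `x` and a descent of `x t`, and a look at the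
positions shows `t = s`, since a position strictly between those swapped by `t`, carrying an
intermediate value, would make `ℓ(x t) ≥ ℓ(x) + 3`. Moving a whole chain by `s` gives the
lifting property.

For the theorem choose a descent `s` of `w₂`. If `s` is an ascent of `w₁`, lifting shows that the
middle elements are exactly `w₁ s` and `w₂ s`. Otherwise `y ↦ y s`, corrected to `w₁ ↦ w₂ s`, is
a bijection from the middle elements of `[w₁ s, w₂ s]` onto those of `[w₁, w₂]`, and we conclude
by induction on `ℓ(w₁)`.
-/

open Finset

theorem mul_swap_mul_swap_eq_mul_swap_mul_swap_apply {α : Type*} [DecidableEq α]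
    (σ : Perm α) (i j a b : α) :
    σ * swap i j * swap a b = σ * swap a b * swap (swap a b i) (swap a b j) := by
  rw [swap_apply_apply, swap_inv]
  simp only [mul_assoc, swap_mul_self_mul]

section Inversions

variable {n : ℕ} {x : Perm (Fin n)} {i j k k' : Fin n}

def inversions (w : Perm (Fin n)) : Finset (Fin n × Fin n) :=
  univ.filter fun p => p.1 < p.2 ∧ w p.2 < w p.1

@[simp]
theorem mem_inversions {w : Perm (Fin n)} {p : Fin n × Fin n} :
    p ∈ inversions w ↔ p.1 < p.2 ∧ w p.2 < w p.1 := by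
  simp [inversions]

theorem card_inversions (w : Perm (Fin n)) : (inversions w).card = invLength w := rfl

theorem invLength_mul_le (x y : Perm (Fin n)) :
    invLength (x * y) ≤ invLength x + invLength y := by
  have hsub : inversions (x * y) ⊆
      inversions y ∪ (inversions x).image fun p => (y⁻¹ p.1, y⁻¹ p.2) := by
    rintro ⟨a, b⟩ hab
    rw [mem_inversions] at hab
    rcases lt_or_gt_of_ne (y.injective.ne hab.1.ne') with hy | hy
    · exact mem_union_left _ (mem_inversions.2 ⟨hab.1, hy⟩)
    · refine mem_union_right _ (mem_image.2 ⟨(y a, y b), mem_inversions.2 ⟨hy, hab.2⟩, ?_⟩)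
      simp
  calc invLength (x * y) ≤ (inversions y).card + (inversions x).card :=
        (card_le_card hsub).trans ((card_union_le _ _).trans (Nat.add_le_add_left card_image_le _))
    _ = invLength x + invLength y := Nat.add_comm _ _

theorem invLength_lt_mul_swap (hij : i < j) (hx : x i < x j) :
    invLength x < invLength (x * swap i j) := by
  set t := swap i j
  -- `t` reverses the order of `(i, j)` and of the pairs `(i, p)`, `(p, j)` with `i < p < j`
  -- only; such an inversion of `x` stays an inversion of `x * t`, the others are moved by `t`.
  let φ : Fin n × Fin n → Fin n × Fin n := fun p => if t p.1 < t p.2 then (t p.1, t p.2) else p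
  have hmaps : (inversions x).image φ ⊆ inversions (x * t) := by
    refine image_subset_iff.2 ?_
    rintro ⟨a, b⟩ hab
    rw [mem_inversions] at hab
    by_cases h : t a < t b
    · simpa [φ, h, t] using hab.2
    · simp only [φ, h, if_false, mem_inversions, Perm.mul_apply]
      refine ⟨hab.1, ?_⟩
      obtain ⟨hab, hxab⟩ := hab
      simp only [t, swap_apply_def] at h ⊢
      split_ifs at h ⊢ <;> subst_vars <;> order
  have hinj : Set.InjOn φ (inversions x) := by
    rintro ⟨a, b⟩ hab ⟨c, d⟩ hcd h
    rw [mem_coe, mem_inversions] at hab hcd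
    simp only [φ] at h
    split_ifs at h <;> simp only [Prod.mk.injEq, t] at h ⊢ <;> grind [swap_apply_self]
  have hnew : (i, j) ∈ inversions (x * t) \ (inversions x).image φ := by
    refine mem_sdiff.2 ⟨by simpa [t] using ⟨hij, hx⟩, fun himg => ?_⟩
    obtain ⟨⟨a, b⟩, hab, hφ⟩ := mem_image.1 himg
    rw [mem_inversions] at hab
    simp only [φ] at hφ
    split_ifs at hφ <;> simp only [Prod.mk.injEq, t] at hφ <;> grind [swap_apply_self]
  obtain ⟨hij_mem, hij_not_mem⟩ := mem_sdiff.1 hnew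
  calc invLength x = ((inversions x).image φ).card := (card_image_of_injOn hinj).symm
    _ < invLength (x * t) :=
        card_lt_card ((ssubset_iff_of_subset hmaps).2 ⟨(i, j), hij_mem, hij_not_mem⟩)

theorem invLength_mul_swap_lt (hij : i < j) (hx : x j < x i) :
    invLength (x * swap i j) < invLength x := by
  simpa using invLength_lt_mul_swap (x := x * swap i j) hij (by simpa using hx)

theorem invLength_lt_mul_swap_iff (hij : i < j) :
    invLength x < invLength (x * swap i j) ↔ x i < x j :=
  ⟨fun h => (lt_or_gt_of_ne (x.injective.ne hij.ne)).resolve_right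
    fun hx => (invLength_mul_swap_lt hij hx).not_gt h, invLength_lt_mul_swap hij⟩

theorem invLength_mul_swap_lt_iff (hij : i < j) :
    invLength (x * swap i j) < invLength x ↔ x j < x i :=
  ⟨fun h => (lt_or_gt_of_ne (x.injective.ne hij.ne)).resolve_left
    fun hx => (invLength_lt_mul_swap hij hx).not_gt h, invLength_mul_swap_lt hij⟩

theorem invLength_mul_swap_ne (hij : i ≠ j) : invLength (x * swap i j) ≠ invLength x := by
  wlog hlt : i < j generalizing i j
  · rw [swap_comm]
    exact this hij.symm (lt_of_le_of_ne (not_lt.1 hlt) hij.symm)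
  rcases lt_or_gt_of_ne (x.injective.ne hij) with hx | hx
  · exact (invLength_lt_mul_swap hlt hx).ne'
  · exact (invLength_mul_swap_lt hlt hx).ne

theorem invLength_swap_le_one (hk : k ⋖ k') : invLength (swap k k') ≤ 1 := by
  rw [← card_inversions]
  refine (card_le_card fun p hp => ?_).trans (card_singleton (k, k')).le
  obtain ⟨a, b⟩ := p
  simp only [mem_inversions] at hp
  obtain ⟨hab, hs⟩ := hp
  have := hk.1
  rw [mem_singleton, Prod.mk.injEq]
  simp only [swap_apply_def] at hs
  split_ifs at hs <;> subst_vars <;>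
    first | order | exact ⟨rfl, rfl⟩ | exact (hk.2 hs hab).elim | exact (hk.2 hab hs).elim

theorem invLength_mul_swap_of_covBy (hk : k ⋖ k') (x : Perm (Fin n)) :
    invLength (x * swap k k') = invLength x + 1 ∨ invLength (x * swap k k') + 1 = invLength x := by
  have hle := invLength_mul_le x (swap k k')
  have hge := invLength_mul_le (x * swap k k') (swap k k')
  rw [mul_swap_mul_self] at hge
  have := invLength_swap_le_one hk
  have := invLength_mul_swap_ne (x := x) hk.lt.ne
  omega

theorem invLength_add_three_le_mul_swap {p : Fin n} (hip : i < p) (hpj : p < j)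
    (hxip : x i < x p) (hxpj : x p < x j) : invLength x + 3 ≤ invLength (x * swap i j) := by
  have hswap : swap i j = swap p j * swap i p * swap p j := by
    rw [swap_mul_swap_mul_swap hip.ne (hip.trans hpj).ne, swap_comm]
  set x₁ := x * swap p j
  set x₂ := x₁ * swap i p
  have h₁ : invLength x < invLength x₁ := invLength_lt_mul_swap hpj hxpj
  have h₂ : invLength x₁ < invLength x₂ := by
    refine invLength_lt_mul_swap hip ?_
    simpa [x₁, swap_apply_of_ne_of_ne hip.ne (hip.trans hpj).ne] using hxip.trans hxpj
  have h₃ : invLength x₂ < invLength (x₂ * swap p j) := by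
    refine invLength_lt_mul_swap hpj ?_
    simpa [x₂, x₁, swap_apply_of_ne_of_ne hip.ne (hip.trans hpj).ne,
      swap_apply_of_ne_of_ne (hip.trans hpj).ne' hpj.ne'] using hxip
  have : x * swap i j = x₂ * swap p j := by simp only [hswap, x₂, x₁, mul_assoc]
  rw [this]
  omega

theorem swap_eq_of_invLength_mul_swap_eq_add_one (hij : i < j) (hk : k ⋖ k')
    (hcov : invLength (x * swap i j) = invLength x + 1) (hx : x k < x k')
    (hy : (x * swap i j) k' < (x * swap i j) k) : swap i j = swap k k' := by
  have hxij : x i < x j := (invLength_lt_mul_swap_iff hij).1 (by omega)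
  have hbetween : ∀ p, i < p → p < j → x i < x p → x p < x j → False := fun p h₁ h₂ h₃ h₄ => by
    have := invLength_add_three_le_mul_swap h₁ h₂ h₃ h₄
    omega
  suffices i = k ∧ j = k' by rw [this.1, this.2]
  have := hk.lt
  simp only [Perm.mul_apply, swap_apply_def] at hy
  split_ifs at hy <;> subst_vars <;> first | order | exact ⟨rfl, rfl⟩ | skip
  · exact (hbetween k (lt_of_le_of_ne (hk.le_of_lt hij) (Ne.symm ‹_›)) this hy hx).elim
  · exact (hbetween k' this (lt_of_le_of_ne (hk.ge_of_gt hij) ‹_›) hx hy).elim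

theorem invLength_mul_swap_lt_mul_swap_mul_swap (hij : i ≠ j) (hk : k ⋖ k')
    (hne : swap i j ≠ swap k k') (h : invLength x < invLength (x * swap i j)) :
    invLength (x * swap k k') < invLength (x * swap i j * swap k k') := by
  wlog hlt : i < j generalizing i j
  · rw [swap_comm i j] at hne h ⊢
    exact this hij.symm hne h (lt_of_le_of_ne (not_lt.1 hlt) hij.symm)
  have hne' : invLength (x * swap i j * swap k k') ≠ invLength (x * swap k k') := by
    rw [mul_swap_mul_swap_eq_mul_swap_mul_swap_apply]
    exact invLength_mul_swap_ne ((swap k k').injective.ne hij)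
  by_contra hle
  rcases invLength_mul_swap_of_covBy hk x with hx | hx <;>
    rcases invLength_mul_swap_of_covBy hk (x * swap i j) with hy | hy <;> try omega
  refine hne (swap_eq_of_invLength_mul_swap_eq_add_one (x := x) hlt hk (by omega) ?_ ?_)
  · exact (invLength_lt_mul_swap_iff hk.lt).1 (by omega)
  · exact (invLength_mul_swap_lt_iff hk.lt).1 (by omega)

theorem exists_covBy_invLength_mul_swap_lt (hx : invLength x ≠ 0) :
    ∃ k k' : Fin n, k ⋖ k' ∧ invLength (x * swap k k') < invLength x := by
  by_contra! h
  have hmono : StrictMono x := strictMono_of_lt_succ fun a ha => by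
    have hcov := Order.covBy_succ_of_not_isMax ha
    exact (invLength_lt_mul_swap_iff hcov.lt).1
      (lt_of_le_of_ne (h _ _ hcov) (invLength_mul_swap_ne hcov.lt.ne).symm)
  apply hx
  rw [← card_inversions, card_eq_zero, eq_empty_iff_forall_notMem]
  rintro ⟨a, b⟩ hab
  rw [mem_inversions] at hab
  exact (hmono hab.1).not_gt hab.2

end Inversions

section Bruhat

variable {n : ℕ} {u v w x : Perm (Fin n)} {i j k k' : Fin n}

theorem bruhatLE.refl (u : Perm (Fin n)) : bruhatLE u u := Relation.ReflTransGen.refl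

theorem bruhatLE.trans (huv : bruhatLE u v) (hvw : bruhatLE v w) : bruhatLE u w :=
  Relation.ReflTransGen.trans huv hvw

theorem bruhatLE_mul_swap (hij : i ≠ j) (h : invLength u < invLength (u * swap i j)) :
    bruhatLE u (u * swap i j) :=
  Relation.ReflTransGen.single ⟨⟨i, j, hij, rfl⟩, h⟩

theorem mul_swap_bruhatLE (hij : i ≠ j) (h : invLength (u * swap i j) < invLength u) :
    bruhatLE (u * swap i j) u := by
  simpa using bruhatLE_mul_swap (u := u * swap i j) hij (by simpa using h)

theorem bruhatLE.invLength_le (h : bruhatLE u w) : invLength u ≤ invLength w := by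
  induction h with
  | refl => exact le_rfl
  | tail _ hstep ih => exact ih.trans hstep.2.le

theorem bruhatLE.eq_of_invLength_le (h : bruhatLE u w) (hlen : invLength w ≤ invLength u) :
    u = w := by
  rcases Relation.ReflTransGen.cases_tail h with rfl | ⟨x, hux, -, hxw⟩
  · rfl
  · exact absurd hlen (not_le.2 ((bruhatLE.invLength_le hux).trans_lt hxw))

theorem bruhatLE_mul_swap_mul_swap_or_eq (hij : i ≠ j) (hk : k ⋖ k')
    (h : invLength x < invLength (x * swap i j)) :
    bruhatLE (x * swap k k') (x * swap i j * swap k k') ∨ swap i j = swap k k' := by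
  refine or_iff_not_imp_right.2 fun hne => ?_
  rw [mul_swap_mul_swap_eq_mul_swap_mul_swap_apply]
  refine bruhatLE_mul_swap ((swap k k').injective.ne hij) ?_
  rw [← mul_swap_mul_swap_eq_mul_swap_mul_swap_apply]
  exact invLength_mul_swap_lt_mul_swap_mul_swap hij hk hne h

theorem bruhatLE.mul_swap_or (h : bruhatLE u w) (hk : k ⋖ k') :
    bruhatLE (u * swap k k') (w * swap k k') ∨
      bruhatLE (u * swap k k') w ∧ bruhatLE u (w * swap k k') := by
  induction h with
  | refl => exact Or.inl (bruhatLE.refl _)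
  | @tail x y hux hxy ih =>
    obtain ⟨⟨i, j, hij, rfl⟩, hlt⟩ := hxy
    rcases bruhatLE_mul_swap_mul_swap_or_eq hij hk hlt with hstep | hts
    · rcases ih with ih | ⟨ih₁, ih₂⟩
      · exact Or.inl (ih.trans hstep)
      · exact Or.inr ⟨ih₁.trans (bruhatLE_mul_swap hij hlt), ih₂.trans hstep⟩
    · rw [hts, mul_swap_mul_self]
      rcases ih with ih | ⟨ih₁, -⟩
      · exact Or.inr ⟨ih, hux⟩
      · exact Or.inl ih₁

theorem bruhatLE.lifting (h : bruhatLE u w) (hk : k ⋖ k')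
    (hu : invLength u < invLength (u * swap k k')) (hw : invLength (w * swap k k') < invLength w) :
    bruhatLE (u * swap k k') w ∧ bruhatLE u (w * swap k k') := by
  rcases h.mul_swap_or hk with h' | h'
  · exact ⟨h'.trans (mul_swap_bruhatLE hk.lt.ne hw), (bruhatLE_mul_swap hk.lt.ne hu).trans h'⟩
  · exact h'

theorem bruhatLE.mul_swap_mul_swap (h : bruhatLE u w) (hk : k ⋖ k')
    (hs : invLength (u * swap k k') < invLength u ∨ invLength w < invLength (w * swap k k')) :
    bruhatLE (u * swap k k') (w * swap k k') := by
  rcases h.mul_swap_or hk with h' | ⟨h₁, h₂⟩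
  · exact h'
  · rcases hs with hu | hw
    · exact (mul_swap_bruhatLE hk.lt.ne hu).trans h₂
    · exact h₁.trans (bruhatLE_mul_swap hk.lt.ne hw)

end Bruhat

section Middle

variable {n : ℕ} {u w : Perm (Fin n)} {k k' : Fin n}

def bruhatMiddle (u w : Perm (Fin n)) : Set (Perm (Fin n)) :=
  {v | bruhatLE u v ∧ bruhatLE v w ∧ invLength v = invLength u + 1}

theorem bruhatMiddle_eq_pair (h : bruhatLE u w) (hlen : invLength w = invLength u + 2)
    (hk : k ⋖ k') (hu : invLength u < invLength (u * swap k k'))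
    (hw : invLength (w * swap k k') < invLength w) :
    bruhatMiddle u w = {u * swap k k', w * swap k k'} := by
  have hus := invLength_mul_swap_of_covBy hk u
  have hws := invLength_mul_swap_of_covBy hk w
  obtain ⟨hus_w, hu_ws⟩ := h.lifting hk hu hw
  ext v
  simp only [bruhatMiddle, Set.mem_ofPred_eq, Set.mem_insert_iff, Set.mem_singleton_iff]
  constructor
  · rintro ⟨huv, hvw, hv⟩
    rcases invLength_mul_swap_of_covBy hk v with hvs | hvs
    · exact Or.inr ((hvw.lifting hk (by omega) hw).2.eq_of_invLength_le (by omega))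
    · have hu_vs : u = v * swap k k' :=
        (huv.lifting hk hu (by omega)).2.eq_of_invLength_le (by omega)
      exact Or.inl (by rw [hu_vs, mul_swap_mul_self])
  · rintro (rfl | rfl)
    · exact ⟨bruhatLE_mul_swap hk.lt.ne hu, hus_w, by omega⟩
    · exact ⟨hu_ws, mul_swap_bruhatLE hk.lt.ne hw, by omega⟩

theorem bruhatMiddle_eq_image (hlen : invLength w = invLength u + 2)
    (hk : k ⋖ k') (hu : invLength (u * swap k k') < invLength u)
    (hw : invLength (w * swap k k') < invLength w) :
    bruhatMiddle u w = (fun y => if y = u then w * swap k k' else y * swap k k') ''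
      bruhatMiddle (u * swap k k') (w * swap k k') := by
  -- `u` is the only element of the smaller middle set having `swap k k'` as a descent.
  have hus := invLength_mul_swap_of_covBy hk u
  have hws := invLength_mul_swap_of_covBy hk w
  ext v
  simp only [bruhatMiddle, Set.mem_ofPred_eq, Set.mem_image]
  constructor
  · rintro ⟨huv, hvw, hv⟩
    rcases invLength_mul_swap_of_covBy hk v with hvs | hvs
    · have hv_ws : v = w * swap k k' :=
        (hvw.lifting hk (by omega) hw).2.eq_of_invLength_le (by omega)
      exact ⟨u, ⟨mul_swap_bruhatLE hk.lt.ne hu, hv_ws ▸ huv, by omega⟩, by simp [hv_ws]⟩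
    · have hvs_ne : v * swap k k' ≠ u := fun heq => by
        rw [← heq, mul_swap_mul_self] at hu
        omega
      refine ⟨v * swap k k', ⟨huv.mul_swap_mul_swap hk (Or.inl hu),
        hvw.mul_swap_mul_swap hk (Or.inl (by omega)), by omega⟩, ?_⟩
      simp [hvs_ne]
  · rintro ⟨y, ⟨hy₁, hy₂, hy⟩, rfl⟩
    by_cases hyu : y = u
    · subst hyu
      exact ⟨by simpa using hy₂, by simpa using mul_swap_bruhatLE hk.lt.ne hw, by simp; omega⟩
    have hys : invLength (y * swap k k') = invLength y + 1 := by
      rcases invLength_mul_swap_of_covBy hk y with hys | hys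
      · exact hys
      · have hu_y := (hy₁.lifting hk (by rw [mul_swap_mul_self]; omega) (by omega)).1
        rw [mul_swap_mul_self] at hu_y
        exact absurd (hu_y.eq_of_invLength_le (by omega)).symm hyu
    rw [if_neg hyu]
    refine ⟨?_, ?_, by omega⟩
    · simpa using hy₁.mul_swap_mul_swap hk (Or.inr (by omega))
    · simpa using hy₂.mul_swap_mul_swap hk (Or.inr (by simpa using hw))

theorem ncard_bruhatMiddle {u w : Perm (Fin n)} (h : bruhatLE u w)
    (hlen : invLength w = invLength u + 2) : (bruhatMiddle u w).ncard = 2 := by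
  obtain ⟨k, k', hk, hw⟩ := exists_covBy_invLength_mul_swap_lt (x := w) (by omega)
  have hws := invLength_mul_swap_of_covBy hk w
  rcases invLength_mul_swap_of_covBy hk u with hu | hu
  · rw [bruhatMiddle_eq_pair h hlen hk (by omega) hw]
    refine Set.ncard_pair fun heq => ?_
    rw [mul_right_cancel heq] at hlen
    omega
  · rw [bruhatMiddle_eq_image hlen hk (by omega) hw, Set.InjOn.ncard_image]
    · exact ncard_bruhatMiddle (h.mul_swap_mul_swap hk (Or.inl (by omega))) (by omega)
    · rintro y₁ ⟨-, -, hy₁⟩ y₂ ⟨-, -, hy₂⟩ heq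
      simp only at heq
      split_ifs at heq with h₁ h₂ h₂
      · rw [h₁, h₂]
      · rw [← mul_right_cancel heq] at hy₂
        omega
      · rw [mul_right_cancel heq] at hy₁
        omega
      · exact mul_right_cancel heq
termination_by invLength u
decreasing_by omega

end Middle

/-- If `w₁ ≤ w₂` in Bruhat order and `ℓ(w₂) = ℓ(w₁) + 2`, then there are exactly two
elements `v` with `w₁ ≤ v ≤ w₂` and `ℓ(v) = ℓ(w₁) + 1`. -/
theorem exists_two_middle_elements {n : ℕ} (w₁ w₂ : Perm (Fin n))
    (hle : bruhatLE w₁ w₂) (hlen : invLength w₂ = invLength w₁ + 2) :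
    ∃ v₁ v₂ : Perm (Fin n), v₁ ≠ v₂ ∧
      ∀ v : Perm (Fin n),
        (bruhatLE w₁ v ∧ bruhatLE v w₂ ∧ invLength v = invLength w₁ + 1) ↔
          (v = v₁ ∨ v = v₂) := by
  obtain ⟨v₁, v₂, hne, hmiddle⟩ := Set.ncard_eq_two.1 (ncard_bruhatMiddle hle hlen)
  exact ⟨v₁, v₂, hne, fun v => Set.ext_iff.1 hmiddle v⟩
end

section
/- Let W = S_n with Bruhat order ≤ and length ℓ, let w ∈ W and let s be an adjacent transposition with ℓ(s w s) = ℓ(w) + 2. Then there is no element v ≤ w with ℓ(v) = ℓ(w) − 1 such that sv = vs and ℓ(sv) = ℓ(v) − 1. -/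
open Equiv

/-!
Write `s = (a b)`. Multiplying by `s` on either side changes the length by at most one, so
`ℓ(sws) = ℓ(w) + 2` forces `s` to be an ascent of `w` on both sides: `w a < w b` and
`w⁻¹ a < w⁻¹ b`. An element `v` commuting with `s` and having `s` as a descent must interchange
`a` and `b`. A Bruhat cover `v ⋖ w` is `w = v (i j)` with `i < j` and `v i < v j`, and the two
ascent conditions on `w` then force `(i j) = s`; but `vs = sv` is shorter than `v`.
-/

namespace Equiv.Perm

variable {n : ℕ}

def inversions (u : Perm (Fin n)) : Finset (Fin n × Fin n) :=
  Finset.univ.filter fun p => p.1 < p.2 ∧ u p.2 < u p.1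

lemma invLength_eq_card_inversions (u : Perm (Fin n)) : invLength u = (inversions u).card := rfl

@[simp]
lemma mem_inversions {u : Perm (Fin n)} {p : Fin n × Fin n} :
    p ∈ inversions u ↔ p.1 < p.2 ∧ u p.2 < u p.1 := by
  simp [inversions]

lemma invLength_inv (u : Perm (Fin n)) : invLength u⁻¹ = invLength u := by
  simp only [invLength_eq_card_inversions]
  refine Finset.card_nbij' (fun p => (u⁻¹ p.2, u⁻¹ p.1)) (fun p => (u p.2, u p.1))
    (fun p hp => ?_) (fun p hp => ?_) (fun p _ => by simp) (fun p _ => by simp) <;>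
    simpa using (mem_inversions.1 hp).symm

lemma invLength_mul_swap_lt {u : Perm (Fin n)} {i j : Fin n} (hij : i < j) (hu : u j < u i) :
    invLength (u * swap i j) < invLength u := by
  set t := swap i j with ht
  let φ : Fin n × Fin n → Fin n × Fin n := fun p => if t p.1 < t p.2 then (t p.1, t p.2) else p
  have hφφ : ∀ p : Fin n × Fin n, p.1 < p.2 → φ (φ p) = p := by
    intro p hp
    by_cases h : t p.1 < t p.2 <;> simp [φ, h, hp, t]
  have hmaps : Set.MapsTo φ (inversions (u * t)) ((inversions u).erase (i, j)) := by
    rintro ⟨x, y⟩ hp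
    simp only [Finset.mem_coe, mem_inversions, Perm.mul_apply] at hp
    simp only [φ, Finset.mem_coe, Finset.mem_erase, mem_inversions]
    -- A pair reversed by `t` has an endpoint in `{i, j}` and lies in `[i, j]`; since `u j < u i`,
    -- it is then already an inversion of `u`.
    rw [ht, swap_apply_def, swap_apply_def] at hp ⊢
    split_ifs at hp ⊢ <;> subst_vars <;> grind
  have hinj : Set.InjOn φ (inversions (u * t)) := by
    intro p hp q hq hpq
    simp only [Finset.mem_coe, mem_inversions] at hp hq
    rw [← hφφ p hp.1, hpq, hφφ q hq.1]
  have hmem : (i, j) ∈ inversions u := mem_inversions.2 ⟨hij, hu⟩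
  calc invLength (u * t) ≤ ((inversions u).erase (i, j)).card :=
        Finset.card_le_card_of_injOn φ hmaps hinj
    _ < invLength u := Finset.card_erase_lt_of_mem hmem

lemma invLength_lt_invLength_mul_swap_iff {u : Perm (Fin n)} {i j : Fin n} (hij : i < j) :
    invLength u < invLength (u * swap i j) ↔ u i < u j := by
  constructor
  · intro hlt
    by_contra hge
    have hji : u j < u i := lt_of_le_of_ne (not_lt.1 hge) (u.injective.ne hij.ne')
    exact (invLength_mul_swap_lt hij hji).not_gt hlt
  · intro hu
    have hut : (u * swap i j) j < (u * swap i j) i := by simpa using hu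
    simpa [mul_assoc] using invLength_mul_swap_lt hij hut

lemma swap_apply_lt_swap_apply_of_succ {a b x y : Fin n} (hab : (b : ℕ) = a + 1) (hxy : x < y)
    (hne : (x, y) ≠ (a, b)) : swap a b x < swap a b y := by
  rw [swap_apply_def, swap_apply_def]
  split_ifs <;> grind

lemma invLength_swap_mul_le_succ {a b : Fin n} (hab : (b : ℕ) = a + 1) (u : Perm (Fin n)) :
    invLength (swap a b * u) ≤ invLength u + 1 := by
  have hsub : inversions (swap a b * u) ⊆ insert (u⁻¹ a, u⁻¹ b) (inversions u) := by
    rintro ⟨x, y⟩ hp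
    rw [mem_inversions, Perm.mul_apply, Perm.mul_apply] at hp
    rw [Finset.mem_insert, mem_inversions]
    refine or_iff_not_imp_left.2 fun hne => ⟨hp.1, ?_⟩
    by_contra hle
    have hu : u x < u y := lt_of_le_of_ne (not_lt.1 hle) (u.injective.ne hp.1.ne)
    have hne' : (u x, u y) ≠ (a, b) := by
      rintro ⟨⟩
      simp at hne
    exact (swap_apply_lt_swap_apply_of_succ hab hu hne').not_gt hp.2
  calc invLength (swap a b * u) ≤ (insert (u⁻¹ a, u⁻¹ b) (inversions u)).card :=
        Finset.card_le_card hsub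
    _ ≤ invLength u + 1 := Finset.card_insert_le _ _

lemma apply_lt_apply_of_invLength_swap_mul_mul_swap {w : Perm (Fin n)} {a b : Fin n}
    (hab : (b : ℕ) = a + 1) (h : invLength w + 2 ≤ invLength (swap a b * w * swap a b)) :
    w a < w b := by
  have hab' : a < b := Fin.lt_def.2 (by omega)
  by_contra hge
  have hba : w b < w a := lt_of_le_of_ne (not_lt.1 hge) (w.injective.ne hab'.ne')
  have hdesc := invLength_mul_swap_lt hab' hba
  have hleft := invLength_swap_mul_le_succ hab (w * swap a b)
  rw [← mul_assoc] at hleft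
  omega

lemma inv_apply_lt_inv_apply_of_invLength_swap_mul_mul_swap {w : Perm (Fin n)} {a b : Fin n}
    (hab : (b : ℕ) = a + 1) (h : invLength w + 2 ≤ invLength (swap a b * w * swap a b)) :
    w⁻¹ a < w⁻¹ b := by
  have hconj : swap a b * w⁻¹ * swap a b = (swap a b * w * swap a b)⁻¹ := by
    simp [mul_assoc]
  refine apply_lt_apply_of_invLength_swap_mul_mul_swap hab ?_
  rwa [invLength_inv, hconj, invLength_inv]

lemma apply_eq_and_apply_eq_of_commute_swap {v : Perm (Fin n)} {a b : Fin n} (hab : a < b)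
    (hcomm : Commute (swap a b) v) (hdesc : invLength (swap a b * v) < invLength v) :
    v a = b ∧ v b = a := by
  have hva : swap a b (v a) = v b := by simpa using congrArg (· a) hcomm.eq
  rw [swap_apply_def] at hva
  split_ifs at hva with hfix hflip
  · have hasc : v a < v b := by rwa [hfix, ← hva]
    rw [← invLength_lt_invLength_mul_swap_iff hab, ← hcomm.eq] at hasc
    exact absurd hdesc hasc.not_gt
  · exact ⟨hflip, hva.symm⟩
  · exact absurd (v.injective hva) hab.ne

lemma eq_of_mul_swap_ascents {v : Perm (Fin n)} {a b i j : Fin n} (hab : a < b) (hij : i < j)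
    (hv : v i < v j) (hva : v a = b) (hvb : v b = a) (hw : (v * swap i j) a < (v * swap i j) b)
    (hw' : (v * swap i j)⁻¹ a < (v * swap i j)⁻¹ b) : i = a ∧ j = b := by
  have hva' : v⁻¹ b = a := by rw [Perm.inv_eq_iff_eq, hva]
  have hvb' : v⁻¹ a = b := by rw [Perm.inv_eq_iff_eq, hvb]
  simp only [mul_inv_rev, swap_inv, Perm.mul_apply, hva', hvb'] at hw hw'
  -- `hw'` says that `swap i j` reverses the pair `a < b`, so `i = a < b ≤ j` or `i ≤ a < b = j`;
  -- `hv` and `hw` exclude everything but `i = a`, `j = b`.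
  rw [swap_apply_def, swap_apply_def] at hw hw'
  split_ifs at hw hw' <;> subst_vars <;> grind

end Equiv.Perm

namespace bruhatLE

variable {n : ℕ} {v w : Perm (Fin n)}

lemma eq_or_invLength_lt (h : bruhatLE v w) : v = w ∨ invLength v < invLength w := by
  induction h with
  | refl => exact .inl rfl
  | tail _ hstep ih => exact .inr (ih.elim (· ▸ hstep.2) (·.trans hstep.2))

lemma exists_eq_mul_swap_of_invLength_eq_succ (h : bruhatLE v w)
    (hl : invLength w = invLength v + 1) : ∃ i j, i < j ∧ w = v * swap i j := by
  rcases Relation.ReflTransGen.cases_head h with rfl | ⟨u, ⟨⟨i, j, hij, rfl⟩, hlt⟩, hrest⟩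
  · omega
  rcases eq_or_invLength_lt hrest with rfl | hlt'
  · rcases hij.lt_or_gt with hij | hji
    · exact ⟨i, j, hij, rfl⟩
    · exact ⟨j, i, hji, by rw [swap_comm]⟩
  · omega

end bruhatLE

open Equiv.Perm

/-- Let `s` be an adjacent transposition and `w ∈ S_n` with `ℓ(sws) = ℓ(w) + 2`.
Then there is no `v ≤ w` with `ℓ(v) = ℓ(w) - 1` such that `v` commutes with `s`
and `s` is a descent of `v`, i.e. `ℓ(sv) = ℓ(v) - 1`. -/
theorem not_exists_commuting_coatom {n : ℕ} (w : Perm (Fin n)) (a b : Fin n)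
    (hab : (b : ℕ) = (a : ℕ) + 1)
    (h : invLength (Equiv.swap a b * w * Equiv.swap a b) = invLength w + 2) :
    ¬ ∃ v : Perm (Fin n), bruhatLE v w ∧ invLength w = invLength v + 1 ∧
        Equiv.swap a b * v = v * Equiv.swap a b ∧
        invLength v = invLength (Equiv.swap a b * v) + 1 := by
  rintro ⟨v, hvw, hlen, hcomm, hdesc⟩
  have hab' : a < b := Fin.lt_def.2 (by omega)
  obtain ⟨hva, hvb⟩ := apply_eq_and_apply_eq_of_commute_swap hab' hcomm (by omega)
  obtain ⟨i, j, hij, rfl⟩ := hvw.exists_eq_mul_swap_of_invLength_eq_succ hlen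
  have hv : v i < v j := (invLength_lt_invLength_mul_swap_iff hij).1 (by omega)
  obtain ⟨rfl, rfl⟩ := eq_of_mul_swap_ascents hab' hij hv hva hvb
    (apply_lt_apply_of_invLength_swap_mul_mul_swap hab h.ge)
    (inv_apply_lt_inv_apply_of_invLength_swap_mul_mul_swap hab h.ge)
  rw [← hcomm] at hlen
  omega
end

section
/- Let c and c' be compositions of n such that c refines c' (i.e. c' is obtained from c by replacing consecutive blocks of parts of c by their sums). Let λ(c) and λ(c') be the partitions of n obtained by sorting c and c' in decreasing order. Then λ(c) ≤ λ(c') in the dominance order, i.e. for every r, the sum of the r largest parts of λ(c) is at most the sum of the r largest parts of λ(c'). -/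
/-!
The `r` largest parts of `c` form a sub-multiset `t` of `c = L.flatten`. The blocks of `L`
meeting `t` are at most `r` in number, and as parts are nonnegative their sums, which are parts
of `c'`, add up to at least the sum of `t`. Finally, no `r` parts of `c'` exceed the `r` largest.
-/

namespace List

variable {α : Type*} [AddCommMonoid α] [LinearOrder α]

theorem sum_take_succ_le_add_sum_take [IsOrderedAddMonoid α] {a : α} {l : List α}
    (h : ∀ x ∈ l, x ≤ a) {k : ℕ} (hk : k < l.length) :
    (l.take (k + 1)).sum ≤ a + (l.take k).sum := by
  induction l generalizing k with
  | nil => simp at hk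
  | cons b l ih =>
    rw [forall_mem_cons] at h
    cases k with
    | zero => simpa using h.1
    | succ k =>
      simp only [take_succ_cons, sum_cons]
      calc b + (l.take (k + 1)).sum ≤ b + (a + (l.take k).sum) := by
            gcongr; exact ih h.2 (by simpa using hk)
        _ = a + (b + (l.take k).sum) := add_left_comm b a _

theorem Sublist.sum_le_sum_take_of_pairwise_ge [IsOrderedAddMonoid α] {s l : List α}
    (hs : s <+ l) (hl : l.Pairwise (· ≥ ·)) : s.sum ≤ (l.take s.length).sum := by
  induction hs with
  | slnil => simp
  | @cons s l a hsl ih =>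
    rw [pairwise_cons] at hl
    cases hlen : s.length with
    | zero => simp [length_eq_zero_iff.mp hlen]
    | succ k =>
      calc s.sum ≤ (l.take (k + 1)).sum := hlen ▸ ih hl.2
        _ ≤ a + (l.take k).sum :=
          sum_take_succ_le_add_sum_take hl.1 (by have := hsl.length_le; omega)
  | @cons_cons s l a _ ih =>
    simpa using add_le_add_right (ih (pairwise_cons.mp hl).2) a

variable [IsOrderedAddMonoid α] [CanonicallyOrderedAdd α]

theorem Subperm.sum_le_sum_take_insertionSort {s l : List α} (hs : s <+~ l) {r : ℕ}
    (hr : s.length ≤ r) : s.sum ≤ ((l.insertionSort (· ≥ ·)).take r).sum := by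
  have hsorted : s.insertionSort (· ≥ ·) <+ l.insertionSort (· ≥ ·) :=
    sublist_of_subperm_of_pairwise
      ((perm_insertionSort _ s).subperm.trans (hs.trans (perm_insertionSort _ l).symm.subperm))
      (pairwise_insertionSort _ s) (pairwise_insertionSort _ l)
  calc s.sum = (s.insertionSort (· ≥ ·)).sum := (perm_insertionSort _ s).sum_eq.symm
    _ ≤ ((l.insertionSort (· ≥ ·)).take s.length).sum := by
      simpa using hsorted.sum_le_sum_take_of_pairwise_ge (pairwise_insertionSort _ l)
    _ ≤ ((l.insertionSort (· ≥ ·)).take r).sum := monotone_sum_take _ hr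

theorem exists_sublist_map_sum_of_le_flatten (L : List (List α)) (t : Multiset α)
    (ht : t ≤ L.flatten) :
    ∃ s, s <+ L.map sum ∧ s.length ≤ Multiset.card t ∧ t.sum ≤ s.sum := by
  induction L generalizing t with
  | nil => exact ⟨[], Sublist.refl _, by simp_all [Multiset.le_zero.mp (by simpa using ht)]⟩
  | cons b L ih =>
    set B : Multiset α := ↑b
    have hdecomp : t - B + t ∩ B = t := Multiset.sub_add_inter t B
    obtain ⟨s, hs, hlen, hsum⟩ := ih (t - B) <| by
      rw [tsub_le_iff_left]; simpa [B] using ht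
    by_cases hB : t ∩ B = 0
    · refine ⟨s, hs.cons _, ?_, ?_⟩
      · calc s.length ≤ Multiset.card (t - B) := hlen
          _ ≤ Multiset.card t := Multiset.card_le_card (Multiset.sub_le_self t B)
      · rw [← hdecomp, hB, add_zero]; exact hsum
    · have hBsum : (t ∩ B).sum ≤ b.sum := by
        obtain ⟨u, hu⟩ :=
          Multiset.le_iff_exists_add.mp (Multiset.inter_le_right (s := t) (t := B))
        calc (t ∩ B).sum ≤ (t ∩ B).sum + u.sum := le_self_add
          _ = b.sum := by rw [← Multiset.sum_add, ← hu, Multiset.sum_coe]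
      refine ⟨b.sum :: s, hs.cons_cons _, ?_, ?_⟩
      · have := Multiset.card_pos.mpr hB
        rw [← hdecomp, Multiset.card_add, length_cons]
        omega
      · rw [← hdecomp, Multiset.sum_add, sum_cons, add_comm]
        exact add_le_add hBsum hsum

end List

theorem dominance_of_refinement_general (c c' : List ℕ)
    (href : ∃ L : List (List ℕ), L.flatten = c ∧ L.map List.sum = c') :
    ∀ r : ℕ,
      ((c.insertionSort (· ≥ ·)).take r).sum ≤ ((c'.insertionSort (· ≥ ·)).take r).sum := by
  obtain ⟨L, rfl, rfl⟩ := href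
  intro r
  set t := (L.flatten.insertionSort (· ≥ ·)).take r
  have ht : t.Subperm L.flatten :=
    (List.take_sublist _ _).subperm.trans (List.perm_insertionSort _ _).subperm
  obtain ⟨s, hs, hlen, hsum⟩ :=
    List.exists_sublist_map_sum_of_le_flatten L t (Multiset.coe_le.mpr ht)
  calc t.sum ≤ s.sum := by simpa using hsum
    _ ≤ _ := hs.subperm.sum_le_sum_take_insertionSort <| by
      simpa using hlen.trans (List.length_take_le _ _)

/-- If a composition `c` of `n` refines a composition `c'` (i.e. `c'` is obtained from `c`
by merging consecutive blocks of parts), then the partition obtained by sorting `c` in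
decreasing order is dominated by the one obtained from `c'`: for every `r`, the sum of the
`r` largest parts of `c` is at most the sum of the `r` largest parts of `c'`. -/
theorem dominance_of_refinement (n : ℕ) (c c' : List ℕ)
    (hc : ∀ x ∈ c, 0 < x) (hc' : ∀ x ∈ c', 0 < x)
    (hsum : c.sum = n) (hsum' : c'.sum = n)
    (href : ∃ L : List (List ℕ), L.flatten = c ∧ L.map List.sum = c') :
    ∀ r : ℕ,
      ((c.insertionSort (· ≥ ·)).take r).sum ≤ ((c'.insertionSort (· ≥ ·)).take r).sum :=
  dominance_of_refinement_general c c' href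
end

section
/- Let c = (n₁, …, n_r) and c' = (m₁, …, m_s) be compositions of n, and let Y_c and Y_{c'} be the corresponding Young subgroups of S_n (the stabilizers of the partitions of {1, …, n} into consecutive blocks of sizes n₁, …, n_r, resp. m₁, …, m_s). Then Y_c and Y_{c'} are conjugate subgroups of S_n if and only if c and c' become equal after sorting in decreasing order (i.e. they have the same multiset of parts). -/
open Equiv

/-!
The Young subgroup of `c` is the stabilizer of the fibres of `c.index`, and it determines this
fibre partition: `x` and `y` lie in the same block iff the transposition `swap x y` belongs to it.
Hence `g Y_c g⁻¹ = Y_{c'}` iff `g` carries the blocks of `c` onto the blocks of `c'`, and such a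
`g` exists iff the two families of block sizes agree up to reindexing.
-/

/-- The Young subgroup of `S_n` associated to a composition `c` of `n`: the subgroup of
permutations preserving each of the consecutive blocks of `c`. -/
def youngSubgroup {n : ℕ} (c : Composition n) : Subgroup (Perm (Fin n)) where
  carrier := {σ | ∀ x : Fin n, c.index (σ x) = c.index x}
  one_mem' := fun _ => rfl
  mul_mem' := fun {a b} ha hb x => (ha (b x)).trans (hb x)
  inv_mem' := fun {a} ha x =>
    ((congrArg c.index (a.apply_symm_apply x)).symm.trans (ha (a⁻¹ x))).symm

open Finset Function

section Fibers

variable {α α' β β' γ : Type*}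

theorem exists_equiv_of_card_fiber_eq [Finite α] [Finite β] {f : α → γ} {g : β → γ}
    (h : ∀ c, Nat.card {a // f a = c} = Nat.card {b // g b = c}) :
    ∃ e : α ≃ β, ∀ a, g (e a) = f a :=
  ⟨ofFiberEquiv fun c => (Finite.card_eq.mp (h c)).some, ofFiberEquiv_map _⟩

theorem Nat.card_fiber_eq_count_map [Fintype α] [DecidableEq γ] (f : α → γ) (c : γ) :
    Nat.card {a // f a = c} = (univ.val.map f).count c := by
  simp only [eq_comm, Nat.card_eq_fintype_card, Fintype.card_subtype, Multiset.count_map]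
  rfl

theorem exists_equiv_of_map_univ_eq [Fintype α] [Fintype β] [DecidableEq γ]
    {f : α → γ} {g : β → γ} (h : univ.val.map f = univ.val.map g) :
    ∃ e : α ≃ β, ∀ a, g (e a) = f a :=
  exists_equiv_of_card_fiber_eq fun c => by
    rw [Nat.card_fiber_eq_count_map, Nat.card_fiber_eq_count_map, h]

theorem map_univ_card_fiber_eq_iff [Fintype α] [Fintype α'] [Fintype β] [Fintype β']
    (f : α → β) (f' : α' → β') :
    univ.val.map (fun b => Nat.card {a // f a = b}) =
        univ.val.map (fun b' => Nat.card {a' // f' a' = b'}) ↔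
      ∃ (g : α ≃ α') (e : β ≃ β'), ∀ a, f' (g a) = e (f a) := by
  constructor
  · intro h
    obtain ⟨e, he⟩ := exists_equiv_of_map_univ_eq h
    have hcard : ∀ b', Nat.card {a // e (f a) = b'} = Nat.card {a' // f' a' = b'} := by
      intro b'
      calc Nat.card {a // e (f a) = b'} = Nat.card {a // f a = e.symm b'} :=
            Nat.card_congr (subtypeEquivRight fun _ => e.eq_symm_apply.symm)
        _ = Nat.card {a' // f' a' = b'} := by rw [← he, apply_symm_apply]
    obtain ⟨g, hg⟩ := exists_equiv_of_card_fiber_eq hcard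
    exact ⟨g, e, hg⟩
  · rintro ⟨g, e, hge⟩
    rw [← Multiset.map_univ_val_equiv e, Multiset.map_map]
    refine Multiset.map_congr rfl fun b _ => ?_
    show _ = Nat.card {a' // f' a' = e b}
    exact Nat.card_congr (g.subtypeEquiv fun a => by rw [hge, e.apply_eq_iff_eq])

end Fibers

section FiberStabilizer

variable {α β β' : Type*}

def fiberStabilizer (f : α → β) : Subgroup (Perm α) where
  carrier := {σ | ∀ x, f (σ x) = f x}
  one_mem' _ := rfl
  mul_mem' hσ hτ x := (hσ _).trans (hτ x)
  inv_mem' {σ} hσ x := by simpa using (hσ (σ⁻¹ x)).symm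

@[simp]
theorem mem_fiberStabilizer {f : α → β} {σ : Perm α} :
    σ ∈ fiberStabilizer f ↔ ∀ x, f (σ x) = f x :=
  Iff.rfl

theorem swap_mem_fiberStabilizer_iff [DecidableEq α] {f : α → β} {x y : α} :
    swap x y ∈ fiberStabilizer f ↔ f x = f y := by
  refine ⟨fun h => by simpa using (h x).symm, fun h z => ?_⟩
  rw [swap_apply_def]
  split_ifs with hx hy <;> simp [*]

theorem fiberStabilizer_eq_iff [DecidableEq α] {f : α → β} {f' : α → β'} :
    fiberStabilizer f = fiberStabilizer f' ↔ ∀ x y, f x = f y ↔ f' x = f' y := by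
  refine ⟨fun h x y => ?_, fun h => Subgroup.ext fun σ => ?_⟩
  · rw [← swap_mem_fiberStabilizer_iff, h, swap_mem_fiberStabilizer_iff]
  · simp only [mem_fiberStabilizer, h]

theorem map_conj_fiberStabilizer (g : Perm α) (f : α → β) :
    (fiberStabilizer f).map (MulAut.conj g).toMonoidHom = fiberStabilizer (f ∘ ⇑g⁻¹) := by
  ext τ
  simp only [Subgroup.mem_map_equiv, MulAut.conj_symm_apply, mem_fiberStabilizer,
    Perm.coe_mul, comp_apply]
  exact g.forall_congr_left.trans <| by simp

theorem exists_equiv_of_eq_iff_eq {f : α → β} {f' : α → β'} (hf : Surjective f)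
    (hf' : Surjective f') (h : ∀ x y, f x = f y ↔ f' x = f' y) :
    ∃ e : β ≃ β', ∀ x, f' x = e (f x) := by
  have hsec : ∀ x, f' (surjInv hf (f x)) = f' x := fun x =>
    (h _ _).mp (surjInv_eq hf (f x))
  refine ⟨Equiv.ofBijective (f' ∘ surjInv hf) ⟨fun b₁ b₂ hb => ?_, fun b' => ?_⟩,
    fun x => (hsec x).symm⟩
  · rw [← surjInv_eq hf b₁, ← surjInv_eq hf b₂]
    exact (h _ _).mpr hb
  · obtain ⟨x, rfl⟩ := hf' b'
    exact ⟨f x, hsec x⟩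

theorem map_conj_fiberStabilizer_eq_iff [DecidableEq α] {f : α → β} {f' : α → β'}
    (hf : Surjective f) (hf' : Surjective f') (g : Perm α) :
    (fiberStabilizer f).map (MulAut.conj g).toMonoidHom = fiberStabilizer f' ↔
      ∃ e : β ≃ β', ∀ x, f' (g x) = e (f x) := by
  rw [map_conj_fiberStabilizer, fiberStabilizer_eq_iff]
  constructor
  · intro h
    obtain ⟨e, he⟩ := exists_equiv_of_eq_iff_eq (hf.comp g⁻¹.surjective) hf' h
    exact ⟨e, fun x => by simpa using he (g x)⟩
  · rintro ⟨e, he⟩ x y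
    obtain ⟨x, rfl⟩ := g.surjective x
    obtain ⟨y, rfl⟩ := g.surjective y
    simp [he]

end FiberStabilizer

namespace Composition

variable {n : ℕ} (c : Composition n)

theorem index_blocksFinEquiv (p : Σ i : Fin c.length, Fin (c.blocksFun i)) :
    c.index (c.blocksFinEquiv p) = p.1 :=
  c.index_embedding _ _

theorem index_surjective : Surjective c.index := fun i =>
  ⟨c.blocksFinEquiv ⟨i, ⟨0, c.one_le_blocksFun i⟩⟩, c.index_blocksFinEquiv _⟩

theorem card_index_fiber (i : Fin c.length) :
    Nat.card {x // c.index x = i} = c.blocksFun i := by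
  rw [← Nat.card_congr (c.blocksFinEquiv.subtypeEquiv fun p => by rw [index_blocksFinEquiv]),
    Nat.card_congr (sigmaSubtype i), Nat.card_eq_fintype_card, Fintype.card_fin]

theorem blocks_eq_map_card_index_fiber :
    (c.blocks : Multiset ℕ) = univ.val.map fun i => Nat.card {x // c.index x = i} := by
  simp only [card_index_fiber, Fin.univ_val_map, ofFn_blocksFun]

end Composition

theorem youngSubgroup_eq_fiberStabilizer {n : ℕ} (c : Composition n) :
    youngSubgroup c = fiberStabilizer c.index :=
  rfl

/-- Two Young subgroups of `S_n` are conjugate if and only if the corresponding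
compositions have the same multiset of parts (equivalently, are equal after sorting
in decreasing order). -/
theorem youngSubgroup_isConj_iff {n : ℕ} (c c' : Composition n) :
    (∃ g : Perm (Fin n),
        Subgroup.map (MulAut.conj g).toMonoidHom (youngSubgroup c) = youngSubgroup c') ↔
      (c.blocks : Multiset ℕ) = (c'.blocks : Multiset ℕ) := by
  simp only [youngSubgroup_eq_fiberStabilizer,
    map_conj_fiberStabilizer_eq_iff c.index_surjective c'.index_surjective,
    Composition.blocks_eq_map_card_index_fiber, map_univ_card_fiber_eq_iff]
end

section
/- Let G be a finite group, k an algebraically closed field of characteristic zero, and let V₁ →^{f₁} V₂ →^{f₂} V₃ →^{f₃} V₄ be an exact sequence of finite-dimensional k-linear representations of G (exact at V₂ and V₃). Assume no irreducible representation of G occurs both in V₁ and in V₄. If for every irreducible representation Z occurring in both V₁ and V₂ the induced map f₁^Z on Z-isotypic components is surjective, then for every irreducible representation Z occurring in both V₂ and V₃ the induced map f₂^Z on Z-isotypic components is injective. -/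
section

variable (A : Type) [Ring A]

/-- The irreducible module `Z` occurs in `V` if `V` has a submodule isomorphic to `Z`. -/
def OccursIn (Z V : Type) [AddCommGroup Z] [Module A Z] [AddCommGroup V] [Module A V] :
    Prop :=
  ∃ p : Submodule A V, Nonempty (p ≃ₗ[A] Z)

/-- The `Z`-isotypic component of `V`: the sum of all submodules of `V` isomorphic to `Z`. -/
def isotypic (Z V : Type) [AddCommGroup Z] [Module A Z] [AddCommGroup V] [Module A V] :
    Submodule A V :=
  sSup {p : Submodule A V | Nonempty (p ≃ₗ[A] Z)}

end

/-!
Suppose `ker f₂` meets the `Z`-isotypic component of `V₂` in a simple submodule `S ≅ Z`. By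
exactness `S ⊆ im f₁`, and a simple submodule of the image of a semisimple module (Maschke)
lifts, so `Z` occurs in `V₁`; surjectivity of `f₁^Z` then forces `f₂` to kill all of `V₂^Z`.
By Schur, a copy `p ≅ Z` in `V₃` is either mapped isomorphically by `f₃`, so that `Z` occurs in
both `V₁` and `V₄`, or lies in `ker f₃ = im f₂`; there it lifts to a copy of `Z` inside `V₂^Z`
on which `f₂` is injective, which is absurd.
-/

variable {A : Type} [Ring A] {Z M N W : Type} [AddCommGroup Z] [Module A Z]
  [AddCommGroup M] [Module A M] [AddCommGroup N] [Module A N] [AddCommGroup W] [Module A W]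

open LinearMap

theorem LinearMap.exists_disjoint_ker_map_eq_of_le_range [IsSemisimpleModule A M]
    (g : M →ₗ[A] N) {T : Submodule A N} (hT : T ≤ range g) :
    ∃ T' : Submodule A M, Disjoint T' (ker g) ∧ T'.map g = T := by
  obtain ⟨C, hC⟩ := exists_isCompl (ker g)
  refine ⟨C ⊓ T.comap g, hC.symm.disjoint.mono_left inf_le_left, ?_⟩
  have hsup : ker g ⊔ C ⊓ T.comap g = T.comap g := by
    rw [← sup_inf_assoc_of_le C (ker_le_comap g), hC.sup_eq_top, top_inf_eq]
  calc (C ⊓ T.comap g).map g = (ker g ⊔ C ⊓ T.comap g).map g := by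
        rw [Submodule.map_sup, le_ker_iff_map.mp le_rfl, bot_sup_eq]
    _ = T := by rw [hsup, Submodule.map_comap_eq_of_le hT]

theorem LinearMap.nonempty_linearEquiv_map_of_disjoint_ker (g : M →ₗ[A] N) {p : Submodule A M}
    (h : Disjoint p (ker g)) : Nonempty (p ≃ₗ[A] p.map g) :=
  ⟨(LinearEquiv.ofInjective _ (injective_domRestrict_iff.mpr h)).trans
    (.ofEq _ _ (range_domRestrict p g))⟩

theorem LinearMap.exists_disjoint_ker_linearEquiv_of_le_range [IsSemisimpleModule A M]
    (g : M →ₗ[A] N) {T : Submodule A N} (hT : T ≤ range g) (e : T ≃ₗ[A] Z) :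
    ∃ T' : Submodule A M, Disjoint T' (ker g) ∧ Nonempty (T' ≃ₗ[A] Z) := by
  obtain ⟨T', hdisj, rfl⟩ := g.exists_disjoint_ker_map_eq_of_le_range hT
  obtain ⟨e'⟩ := g.nonempty_linearEquiv_map_of_disjoint_ker hdisj
  exact ⟨T', hdisj, ⟨e'.trans e⟩⟩

theorem occursIn_of_range_inf_isotypic_ne_bot [IsSemisimpleModule A M] [IsSemisimpleModule A N]
    [IsSimpleModule A Z] (g : M →ₗ[A] N) (h : range g ⊓ isotypic A Z N ≠ ⊥) :
    OccursIn A Z M := by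
  obtain ⟨S, hS, _⟩ := (IsSemisimpleModule.eq_bot_or_exists_simple_le _).resolve_left h
  obtain ⟨e⟩ := isIsotypicOfType_submodule_iff.mp (.isotypicComponent A N Z) S
    (hS.trans inf_le_right)
  obtain ⟨T', -, he'⟩ := g.exists_disjoint_ker_linearEquiv_of_le_range (hS.trans inf_le_left) e
  exact ⟨T', he'⟩

theorem occursIn_or_exists_le_ker [IsSimpleModule A Z] (g : N →ₗ[A] W) (h : OccursIn A Z N) :
    OccursIn A Z W ∨ ∃ p ≤ ker g, Nonempty (p ≃ₗ[A] Z) := by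
  obtain ⟨p, ⟨e⟩⟩ := h
  by_cases hp : p ≤ ker g
  · exact .inr ⟨p, hp, ⟨e⟩⟩
  · have hatom : IsAtom p := isSimpleModule_iff_isAtom.mp (.congr e)
    obtain ⟨e'⟩ := g.nonempty_linearEquiv_map_of_disjoint_ker (hatom.not_le_iff_disjoint.mp hp)
    exact .inl ⟨p.map g, ⟨e'.symm.trans e⟩⟩

theorem not_isotypic_le_ker_of_le_range [IsSemisimpleModule A M] [IsSimpleModule A Z]
    (g : M →ₗ[A] N) {p : Submodule A N} (hp : p ≤ range g) (e : p ≃ₗ[A] Z) :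
    ¬ isotypic A Z M ≤ ker g := by
  intro hker
  obtain ⟨T, hdisj, ⟨e'⟩⟩ := g.exists_disjoint_ker_linearEquiv_of_le_range hp e
  have hle : T ≤ isotypic A Z M :=
    le_sSup (show T ∈ {p : Submodule A M | Nonempty (p ≃ₗ[A] Z)} from ⟨e'⟩)
  have hbot : T = ⊥ := hdisj.eq_bot_of_le (hle.trans hker)
  have := IsSimpleModule.nontrivial A Z
  have : Nontrivial T := e'.toEquiv.nontrivial
  exact (Submodule.nontrivial_iff_ne_bot.mp this) hbot

theorem ker_inf_isotypic_eq_bot_of_exact {V₁ V₂ V₃ V₄ : Type} [AddCommGroup V₁] [Module A V₁]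
    [AddCommGroup V₂] [Module A V₂] [AddCommGroup V₃] [Module A V₃] [AddCommGroup V₄] [Module A V₄]
    [IsSemisimpleModule A V₁] [IsSemisimpleModule A V₂] [IsSimpleModule A Z]
    (f₁ : V₁ →ₗ[A] V₂) (f₂ : V₂ →ₗ[A] V₃) (f₃ : V₃ →ₗ[A] V₄)
    (hex₂ : range f₁ = ker f₂) (hex₃ : range f₂ = ker f₃)
    (h14 : OccursIn A Z V₁ → ¬ OccursIn A Z V₄)
    (hsurj : OccursIn A Z V₁ → isotypic A Z V₂ ≤ (isotypic A Z V₁).map f₁)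
    (h3 : OccursIn A Z V₃) : ker f₂ ⊓ isotypic A Z V₂ = ⊥ := by
  by_contra hne
  have h1 : OccursIn A Z V₁ := occursIn_of_range_inf_isotypic_ne_bot f₁ (hex₂ ▸ hne)
  have hker : isotypic A Z V₂ ≤ ker f₂ := hex₂ ▸ (hsurj h1).trans map_le_range
  rcases occursIn_or_exists_le_ker f₃ h3 with h4 | ⟨p, hp, ⟨e⟩⟩
  · exact h14 h1 h4
  · exact not_isotypic_le_ker_of_le_range f₂ (hex₃ ▸ hp) e hker

theorem si_injective_of_si_surjective_general
    (k : Type) [Field k] [CharZero k]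
    (G : Type) [Group G] [Finite G]
    (V₁ V₂ V₃ V₄ : Type)
    [AddCommGroup V₁] [AddCommGroup V₂] [AddCommGroup V₃] [AddCommGroup V₄]
    [Module (MonoidAlgebra k G) V₁] [Module (MonoidAlgebra k G) V₂]
    [Module (MonoidAlgebra k G) V₃] [Module (MonoidAlgebra k G) V₄]
    (f₁ : V₁ →ₗ[MonoidAlgebra k G] V₂)
    (f₂ : V₂ →ₗ[MonoidAlgebra k G] V₃)
    (f₃ : V₃ →ₗ[MonoidAlgebra k G] V₄)
    (hex₂ : LinearMap.range f₁ = LinearMap.ker f₂)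
    (hex₃ : LinearMap.range f₂ = LinearMap.ker f₃)
    (hdisj : ¬ ∃ (Z : Type) (_ : AddCommGroup Z) (_ : Module (MonoidAlgebra k G) Z),
        IsSimpleModule (MonoidAlgebra k G) Z ∧
        OccursIn (MonoidAlgebra k G) Z V₁ ∧ OccursIn (MonoidAlgebra k G) Z V₄)
    (hsurj : ∀ (Z : Type) [AddCommGroup Z] [Module (MonoidAlgebra k G) Z],
        IsSimpleModule (MonoidAlgebra k G) Z →
        OccursIn (MonoidAlgebra k G) Z V₁ → OccursIn (MonoidAlgebra k G) Z V₂ →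
        isotypic (MonoidAlgebra k G) Z V₂ ≤
          Submodule.map f₁ (isotypic (MonoidAlgebra k G) Z V₁)) :
    ∀ (Z : Type) [AddCommGroup Z] [Module (MonoidAlgebra k G) Z],
        IsSimpleModule (MonoidAlgebra k G) Z →
        OccursIn (MonoidAlgebra k G) Z V₂ → OccursIn (MonoidAlgebra k G) Z V₃ →
        LinearMap.ker f₂ ⊓ isotypic (MonoidAlgebra k G) Z V₂ = ⊥ := by
  intro Z _ _ hZ hZ2 hZ3
  have : IsSimpleModule (MonoidAlgebra k G) Z := hZ
  have : NeZero (Nat.card G : k) := ⟨Nat.cast_ne_zero.mpr Nat.card_pos.ne'⟩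
  exact ker_inf_isotypic_eq_bot_of_exact f₁ f₂ f₃ hex₂ hex₃
    (fun h1 h4 ↦ hdisj ⟨Z, _, _, hZ, h1, h4⟩) (fun h1 ↦ hsurj Z hZ h1 hZ2) hZ3

/-- Let `V₁ → V₂ → V₃ → V₄` be an exact sequence of finite-dimensional representations of a
finite group `G` over an algebraically closed field `k` of characteristic zero (viewed as
modules over the group algebra `k[G]`).  Assume no irreducible representation occurs in both
`V₁` and `V₄`.  If for every irreducible `Z` occurring in both `V₁` and `V₂` the induced map
`f₁^Z` on `Z`-isotypic components is surjective (i.e. the `Z`-isotypic component of `V₂` is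
contained in the image of that of `V₁`), then for every irreducible `Z` occurring in both
`V₂` and `V₃` the induced map `f₂^Z` is injective (i.e. `ker f₂` meets the `Z`-isotypic
component of `V₂` trivially). -/
theorem si_injective_of_si_surjective
    (k : Type) [Field k] [IsAlgClosed k] [CharZero k]
    (G : Type) [Group G] [Finite G]
    (V₁ V₂ V₃ V₄ : Type)
    [AddCommGroup V₁] [AddCommGroup V₂] [AddCommGroup V₃] [AddCommGroup V₄]
    [Module (MonoidAlgebra k G) V₁] [Module (MonoidAlgebra k G) V₂]
    [Module (MonoidAlgebra k G) V₃] [Module (MonoidAlgebra k G) V₄]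
    [Module.Finite (MonoidAlgebra k G) V₁] [Module.Finite (MonoidAlgebra k G) V₂]
    [Module.Finite (MonoidAlgebra k G) V₃] [Module.Finite (MonoidAlgebra k G) V₄]
    (f₁ : V₁ →ₗ[MonoidAlgebra k G] V₂)
    (f₂ : V₂ →ₗ[MonoidAlgebra k G] V₃)
    (f₃ : V₃ →ₗ[MonoidAlgebra k G] V₄)
    (hex₂ : LinearMap.range f₁ = LinearMap.ker f₂)
    (hex₃ : LinearMap.range f₂ = LinearMap.ker f₃)
    (hdisj : ¬ ∃ (Z : Type) (_ : AddCommGroup Z) (_ : Module (MonoidAlgebra k G) Z),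
        IsSimpleModule (MonoidAlgebra k G) Z ∧
        OccursIn (MonoidAlgebra k G) Z V₁ ∧ OccursIn (MonoidAlgebra k G) Z V₄)
    (hsurj : ∀ (Z : Type) [AddCommGroup Z] [Module (MonoidAlgebra k G) Z],
        IsSimpleModule (MonoidAlgebra k G) Z →
        OccursIn (MonoidAlgebra k G) Z V₁ → OccursIn (MonoidAlgebra k G) Z V₂ →
        isotypic (MonoidAlgebra k G) Z V₂ ≤
          Submodule.map f₁ (isotypic (MonoidAlgebra k G) Z V₁)) :
    ∀ (Z : Type) [AddCommGroup Z] [Module (MonoidAlgebra k G) Z],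
        IsSimpleModule (MonoidAlgebra k G) Z →
        OccursIn (MonoidAlgebra k G) Z V₂ → OccursIn (MonoidAlgebra k G) Z V₃ →
        LinearMap.ker f₂ ⊓ isotypic (MonoidAlgebra k G) Z V₂ = ⊥ :=
  si_injective_of_si_surjective_general k G V₁ V₂ V₃ V₄ f₁ f₂ f₃ hex₂ hex₃ hdisj hsurj
end
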